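/- Suppose on a compact connected oriented Riemannian 2-manifold (S,g) of genus 0 we have: K + (1/4) tr χ tr χ̲ = 0, d(tr χ) + (tr χ)ζ = 0, curl ζ = 0, div ζ = 0, and tr χ > 0. Then ζ = 0 and tr χ is a positive constant, and after normalizing tr χ ≡ 1, the Gauss curvature satisfies dK = −(1/2) div χ̲̂ where χ̲̂ is the traceless part of χ̲ determined by the Codazzi equation div χ̲̂ − (1/2) d tr χ̲ = 0. -/
import Mathlib


/-- On a compact connected oriented Riemannian 2-manifold of genus 0 (so that
every closed and coclosed 1-form vanishes, hypothesis `hH1`, and functions with vanishing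
differential are constant, hypothesis `hconn`), suppose
`K + ¼ trχ trχ̲ = 0`, `d(trχ) + trχ ζ = 0`, `curl ζ = 0`, `div ζ = 0`, `trχ > 0`, and the
Codazzi equation `div χ̲̂ − ½ d(trχ̲) − χ̲̂·ζ + ½ trχ̲ ζ = 0` holds.  Then `ζ = 0`, `trχ` is a
(positive) constant, and after normalizing `trχ ≡ 1` the Gauss curvature satisfies
`dK = −½ div χ̲̂`. -/
theorem torsion_vanishes_and_curvature_integrability {M : Type*}
    (g ginv chib : M → Fin 2 → Fin 2 → ℝ)
    (ζ divchib : M → Fin 2 → ℝ)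
    (K trχ trχb : M → ℝ)
    (d : (M → ℝ) → (M → Fin 2 → ℝ))
    (curl div1 : (M → Fin 2 → ℝ) → (M → ℝ))
    -- genus 0: closed and coclosed 1-forms vanish (H¹ = 0)
    (hH1 : ∀ ω : M → Fin 2 → ℝ, curl ω = 0 → div1 ω = 0 → ω = 0)
    -- connectedness: functions with vanishing differential are constant
    (hconn : ∀ φ : M → ℝ, d φ = 0 → ∀ p q, φ p = φ q)
    -- Leibniz rule and d of constants
    (hLeibd : ∀ φ ψ : M → ℝ,
      d (fun p => φ p * ψ p) = fun p A => φ p * d ψ p A + ψ p * d φ p A)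
    (hdconst : ∀ c : ℝ, d (fun _ => c) = 0)
    -- the structure equations
    (hGauss : ∀ p, K p + (1/4) * trχ p * trχb p = 0)
    (hCodazzi₁ : ∀ p A, d trχ p A + trχ p * ζ p A = 0)
    (hcurlζ : curl ζ = 0)
    (hdivζ : div1 ζ = 0)
    (htrχpos : ∀ p, 0 < trχ p)
    (hCodazzi₂ : ∀ p A, divchib p A - (1/2) * d trχb p A
        - (∑ B : Fin 2, ∑ C : Fin 2, chib p A C * ginv p C B * ζ p B)
        + (1/2) * trχb p * ζ p A = 0) :
    ζ = 0 ∧ (∀ p q, trχ p = trχ q) ∧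
      ((∀ p, trχ p = 1) → ∀ p A, d K p A = -(1/2) * divchib p A) := by

  have hz : ζ = 0 := hH1 ζ hcurlζ hdivζ
  have hzp : ∀ p A, ζ p A = 0 := by intro p A; rw [hz]; rfl
  have hdtr : d trχ = 0 := by
    funext p A
    have := hCodazzi₁ p A
    rw [hzp] at this
    simpa using this
  refine ⟨hz, hconn trχ hdtr, ?_⟩
  intro h1 p A
  have hK : K = fun p => (-(1/4)) * trχb p := by
    funext q
    have := hGauss q
    rw [h1 q] at this
    linarith
  have hdK : d K p A = (-(1/4)) * d trχb p A := by
    have := hLeibd (fun _ => (-(1/4) : ℝ)) trχb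
    have h2 : d (fun _ => (-(1/4) : ℝ)) = 0 := hdconst _
    rw [hK, this, h2]
    simp
  have hc := hCodazzi₂ p A
  simp only [hzp, mul_zero, zero_mul, Finset.sum_const_zero, sub_zero, add_zero] at hc
  rw [hdK]
  linarith
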